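/- arXiv:2006.11676 — 2 statements merged into one kernel-verified Lean document; each statement's English description precedes it below -/
import Mathlib

section
/- Let p₀ ∈ (0,1). For each N ∈ ℕ let n_N, m_N, r_N be natural numbers with n_N + m_N + r_N = N and let ρ_{N,1},…,ρ_{N,r_N} ∈ [0,1]; define the survival likelihood L_N(p) = p^{n_N} (1−p)^{m_N} ∏_{i=1}^{r_N} (1 − ρ_{N,i} p) for p ∈ [0,1]. Assume n_N/N → p₀ and r_N/N → 0 as N → ∞. Then any sequence (p̂_N) in [0,1] satisfying L_N(p̂_N) = sup_{p ∈ [0,1]} L_N(p) for every N converges to p₀. -/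
/-!
Write `ℓ_N(q) = q^{n_N/N} (1 - q)^{m_N/N}` for the normalized binomial part of the likelihood.
Since `1 - p ≤ 1 - ρ p ≤ 1`, the pending factors lie between `(1 - p)^{r_N}` and `1`, so
maximality of `p̂_N` gives `p₀^{n_N/N} (1 - p₀)^{(m_N + r_N)/N} ≤ ℓ_N(p̂_N)`. At any cluster point
`q` of `(p̂_N)` this becomes `p₀^{p₀} (1 - p₀)^{1 - p₀} ≤ q^{p₀} (1 - q)^{1 - p₀}` because
`r_N/N → 0`, and by Gibbs' inequality (strict weighted AM-GM) this forces `q = p₀`.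
-/

open Filter Topology Set

noncomputable def survivalLikelihood {ι : Type*} [Fintype ι] (n m : ℕ) (ρ : ι → ℝ) (p : ℝ) : ℝ :=
  p ^ n * (1 - p) ^ m * ∏ i, (1 - ρ i * p)

section SurvivalLikelihood

variable {ι : Type*} [Fintype ι] {ρ : ι → ℝ} {p : ℝ}

lemma one_sub_mul_mem_Icc {a : ℝ} (ha : a ∈ Icc (0 : ℝ) 1) (hp : p ∈ Icc (0 : ℝ) 1) :
    1 - a * p ∈ Icc (1 - p) 1 :=
  ⟨by nlinarith [ha.2, hp.1], by nlinarith [ha.1, hp.1]⟩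

lemma one_sub_pow_card_le_prod_one_sub_mul (hρ : ∀ i, ρ i ∈ Icc (0 : ℝ) 1)
    (hp : p ∈ Icc (0 : ℝ) 1) : (1 - p) ^ Fintype.card ι ≤ ∏ i, (1 - ρ i * p) := by
  calc (1 - p) ^ Fintype.card ι = ∏ _i : ι, (1 - p) := by simp
    _ ≤ ∏ i, (1 - ρ i * p) := Finset.prod_le_prod (fun _ _ ↦ by linarith [hp.2])
        (fun i _ ↦ (one_sub_mul_mem_Icc (hρ i) hp).1)

lemma prod_one_sub_mul_le_one (hρ : ∀ i, ρ i ∈ Icc (0 : ℝ) 1) (hp : p ∈ Icc (0 : ℝ) 1) :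
    ∏ i, (1 - ρ i * p) ≤ 1 :=
  Finset.prod_le_one (fun i _ ↦ by linarith [(one_sub_mul_mem_Icc (hρ i) hp).1, hp.2])
    (fun i _ ↦ (one_sub_mul_mem_Icc (hρ i) hp).2)

lemma survivalLikelihood_le (hρ : ∀ i, ρ i ∈ Icc (0 : ℝ) 1) {n m : ℕ} (hp : p ∈ Icc (0 : ℝ) 1) :
    survivalLikelihood n m ρ p ≤ p ^ n * (1 - p) ^ m :=
  mul_le_of_le_one_right (mul_nonneg (pow_nonneg hp.1 _) (pow_nonneg (sub_nonneg.2 hp.2) _))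
    (prod_one_sub_mul_le_one hρ hp)

lemma le_survivalLikelihood (hρ : ∀ i, ρ i ∈ Icc (0 : ℝ) 1) {n m : ℕ} (hp : p ∈ Icc (0 : ℝ) 1) :
    p ^ n * (1 - p) ^ (m + Fintype.card ι) ≤ survivalLikelihood n m ρ p := by
  rw [pow_add, ← mul_assoc]
  exact mul_le_mul_of_nonneg_left (one_sub_pow_card_le_prod_one_sub_mul hρ hp)
    (mul_nonneg (pow_nonneg hp.1 _) (pow_nonneg (sub_nonneg.2 hp.2) _))

lemma bddAbove_survivalLikelihood_image (hρ : ∀ i, ρ i ∈ Icc (0 : ℝ) 1) (n m : ℕ) :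
    BddAbove (survivalLikelihood n m ρ '' Icc 0 1) := by
  refine ⟨1, forall_mem_image.2 fun p hp ↦ (survivalLikelihood_le hρ hp).trans ?_⟩
  exact mul_le_one₀ (pow_le_one₀ hp.1 hp.2) (pow_nonneg (sub_nonneg.2 hp.2) _)
    (pow_le_one₀ (by linarith [hp.2]) (by linarith [hp.1]))

lemma pow_mul_one_sub_pow_add_card_le_of_eq_sSup (hρ : ∀ i, ρ i ∈ Icc (0 : ℝ) 1) {n m : ℕ}
    {p₀ q : ℝ} (hp₀ : p₀ ∈ Icc (0 : ℝ) 1) (hq : q ∈ Icc (0 : ℝ) 1)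
    (hmax : survivalLikelihood n m ρ q = sSup (survivalLikelihood n m ρ '' Icc 0 1)) :
    p₀ ^ n * (1 - p₀) ^ (m + Fintype.card ι) ≤ q ^ n * (1 - q) ^ m :=
  calc p₀ ^ n * (1 - p₀) ^ (m + Fintype.card ι) ≤ survivalLikelihood n m ρ p₀ :=
        le_survivalLikelihood hρ hp₀
    _ ≤ survivalLikelihood n m ρ q :=
        hmax ▸ le_csSup (bddAbove_survivalLikelihood_image hρ n m) (mem_image_of_mem _ hp₀)
    _ ≤ q ^ n * (1 - q) ^ m := survivalLikelihood_le hρ hq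

end SurvivalLikelihood

lemma pow_mul_pow_rpow_inv_natCast {a b : ℝ} (ha : 0 ≤ a) (hb : 0 ≤ b) (k l N : ℕ) :
    (a ^ k * b ^ l) ^ (N⁻¹ : ℝ) = a ^ ((k : ℝ) / N) * b ^ ((l : ℝ) / N) := by
  rw [Real.mul_rpow (by positivity) (by positivity), div_eq_mul_inv, div_eq_mul_inv,
    Real.rpow_natCast_mul ha, Real.rpow_natCast_mul hb]

lemma rpow_mul_one_sub_rpow_lt {p q : ℝ} (hp : p ∈ Ioo (0 : ℝ) 1) (hq : q ∈ Icc (0 : ℝ) 1)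
    (hqp : q ≠ p) : q ^ p * (1 - q) ^ (1 - p) < p ^ p * (1 - p) ^ (1 - p) := by
  obtain ⟨hp0, hp1⟩ := hp
  have hp1' : 0 < 1 - p := by linarith
  have hne : q / p ≠ (1 - q) / (1 - p) := by
    rw [Ne, div_eq_div_iff hp0.ne' hp1'.ne']
    contrapose! hqp
    linarith
  have hamgm := (Real.geom_mean_lt_arith_mean2_weighted_iff_of_pos hp0 hp1'
    (div_nonneg hq.1 hp0.le) (div_nonneg (sub_nonneg.2 hq.2) hp1'.le) (by ring)).2 hne
  rw [Real.div_rpow hq.1 hp0.le, Real.div_rpow (sub_nonneg.2 hq.2) hp1'.le, div_mul_div_comm,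
    mul_div_cancel₀ _ hp0.ne', mul_div_cancel₀ _ hp1'.ne', add_sub_cancel, div_lt_one] at hamgm
  · exact hamgm
  · positivity

lemma tendsto_natCast_div_of_add_eq {n m : ℕ → ℕ} (hsum : ∀ N, n N + m N = N) {a : ℝ}
    (hn : Tendsto (fun N ↦ (n N : ℝ) / N) atTop (𝓝 a)) :
    Tendsto (fun N ↦ (m N : ℝ) / N) atTop (𝓝 (1 - a)) := by
  refine (tendsto_const_nhds.sub hn).congr' ?_
  filter_upwards [eventually_ne_atTop 0] with N hN
  have hsumℝ : (n N : ℝ) + m N = N := by exact_mod_cast hsum N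
  field_simp
  linarith

lemma tendsto_of_rpow_mul_one_sub_rpow_le {α : Type*} {l : Filter α} {p₀ : ℝ}
    (hp₀ : p₀ ∈ Ioo (0 : ℝ) 1) {x a b c : α → ℝ} (hx : ∀ᶠ i in l, x i ∈ Icc (0 : ℝ) 1)
    (ha : Tendsto a l (𝓝 p₀)) (hb : Tendsto b l (𝓝 (1 - p₀))) (hc : Tendsto c l (𝓝 (1 - p₀)))
    (hle : ∀ᶠ i in l, p₀ ^ a i * (1 - p₀) ^ c i ≤ x i ^ a i * (1 - x i) ^ b i) :
    Tendsto x l (𝓝 p₀) := by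
  have hp₀' : 0 < 1 - p₀ := sub_pos.2 hp₀.2
  refine isCompact_Icc.tendsto_nhds_of_unique_mapClusterPt hx fun q hq hcluster ↦ ?_
  obtain ⟨U, hUl, hxU⟩ := mapClusterPt_iff_ultrafilter.1 hcluster
  have hlim : p₀ ^ p₀ * (1 - p₀) ^ (1 - p₀) ≤ q ^ p₀ * (1 - q) ^ (1 - p₀) :=
    le_of_tendsto_of_tendsto
      (((tendsto_const_nhds.rpow (ha.mono_left hUl) (.inl hp₀.1.ne'))).mul
        (tendsto_const_nhds.rpow (hc.mono_left hUl) (.inl hp₀'.ne')))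
      ((hxU.rpow (ha.mono_left hUl) (.inr hp₀.1)).mul
        ((tendsto_const_nhds.sub hxU).rpow (hb.mono_left hUl) (.inr hp₀')))
      (hUl hle)
  by_contra hqp
  exact (rpow_mul_one_sub_rpow_lt hp₀ hq hqp).not_ge hlim

/-- Deterministic core of Lemma 5.1(2): consistency of the maximum likelihood
estimator of the toxicity probability under the survival likelihood when the
fraction of pending outcomes vanishes. -/
theorem stmt_6 (p₀ : ℝ) (hp₀ : p₀ ∈ Set.Ioo (0:ℝ) 1)
    (n m r : ℕ → ℕ) (hsum : ∀ N, n N + m N + r N = N)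
    (ρ : (N : ℕ) → Fin (r N) → ℝ) (hρ : ∀ N i, ρ N i ∈ Set.Icc (0:ℝ) 1)
    (L : ℕ → ℝ → ℝ)
    (hL : ∀ N p, L N p = p ^ n N * (1 - p) ^ m N * ∏ i, (1 - ρ N i * p))
    (hn : Tendsto (fun N => (n N : ℝ) / N) atTop (nhds p₀))
    (hr : Tendsto (fun N => (r N : ℝ) / N) atTop (nhds 0))
    (phat : ℕ → ℝ) (hmem : ∀ N, phat N ∈ Set.Icc (0:ℝ) 1)
    (hmax : ∀ N, L N (phat N) = sSup (L N '' Set.Icc (0:ℝ) 1)) :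
    Tendsto phat atTop (nhds p₀) := by
  have hL' : ∀ N, L N = survivalLikelihood (n N) (m N) (ρ N) := fun N ↦ funext (hL N)
  have hnr : Tendsto (fun N ↦ ((n N + r N : ℕ) : ℝ) / N) atTop (𝓝 p₀) := by
    simpa only [Nat.cast_add, add_div, add_zero] using hn.add hr
  have hm := tendsto_natCast_div_of_add_eq (m := m) (fun N ↦ by linarith [hsum N]) hnr
  have hmr := tendsto_natCast_div_of_add_eq (m := fun N ↦ m N + r N)
    (fun N ↦ by linarith [hsum N]) hn
  refine tendsto_of_rpow_mul_one_sub_rpow_le hp₀ (.of_forall hmem) hn hm hmr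
    (.of_forall fun N ↦ ?_)
  have hp₀' : p₀ ∈ Icc (0 : ℝ) 1 := Ioo_subset_Icc_self hp₀
  have hbound := pow_mul_one_sub_pow_add_card_le_of_eq_sSup (hρ N) hp₀' (hmem N)
    (hL' N ▸ hmax N)
  rw [Fintype.card_fin] at hbound
  rw [← pow_mul_pow_rpow_inv_natCast hp₀'.1 (sub_nonneg.2 hp₀'.2),
    ← pow_mul_pow_rpow_inv_natCast (hmem N).1 (sub_nonneg.2 (hmem N).2)]
  exact Real.rpow_le_rpow (mul_nonneg (pow_nonneg hp₀'.1 _) (pow_nonneg (sub_nonneg.2 hp₀'.2) _))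
    hbound (by positivity)
end

section
/- Let p₀ ∈ (0,1), let p_L < p₀ < p_U with [p_L, p_U] ⊂ (0,1), and let π₀ be a Borel probability measure on [0,1] with π₀({p : |p − p₀| < ε}) > 0 for all ε > 0. For each N ∈ ℕ let n_N, m_N, r_N be natural numbers with n_N + m_N + r_N = N, assume n_N/N → p₀ and r_N/N → 0, and for s ∈ {0,1,…,r_N} define the imputed complete-data likelihood L_{N,s}(p) = p^{n_N + s} (1−p)^{m_N + r_N − s} for p ∈ [0,1]. Then min_{0 ≤ s ≤ r_N} ( ∫_{(p_L, p_U)} L_{N,s} dπ₀ ) / ( ∫_{[0,1]} L_{N,s} dπ₀ ) → 1 as N → ∞. -/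
/-!
Write `ℓ(a, p) = a log p + (1 - a) log (1 - p)`. With `A = n_N + s` and `a = A / N`, the
imputed likelihood is `L_{N,s}(p) = exp (N ℓ(a, p))`, and `ℓ(a, ·)` is concave with its maximum
at `a`. By Gibbs' inequality `ℓ(p₀, ·)` has a strict maximum at `p₀`, so by continuity there are
`ρ, c > 0` such that `ℓ(a, y) ≥ max (ℓ(a, p_L), ℓ(a, p_U)) + c` whenever `a` and `y` are
`ρ`-close to `p₀`. Since `r_N / N → 0`, every imputed frequency `a` is eventually `ρ`-close to
`p₀`. Then the likelihood outside `(p_L, p_U)` is at most `e^{-cN}` times its value anywhere on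
the `ρ`-ball around `p₀`, which has positive prior mass, so the posterior mass outside
`(p_L, p_U)` is `O(e^{-cN})` uniformly in `s`.
-/

open MeasureTheory Filter

open Real Set

noncomputable def bernoulliLogLik (a p : ℝ) : ℝ :=
  a * log p + (1 - a) * log (1 - p)

/-- `ℓ(a, ·)` lies strictly below its tangent line at `x`. -/
lemma bernoulliLogLik_lt_add_mul {a p x : ℝ} (ha : a ∈ Ioo 0 1) (hp : p ∈ Ioo 0 1)
    (hx : x ∈ Ioo 0 1) (hpx : p ≠ x) :
    bernoulliLogLik a p < bernoulliLogLik a x + (p - x) * (a / x - (1 - a) / (1 - x)) := by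
  obtain ⟨ha0, ha1⟩ := ha
  obtain ⟨hp0, hp1⟩ := hp
  obtain ⟨hx0, hx1⟩ := hx
  have hx1' : 0 < 1 - x := by linarith
  have h₁ : log p - log x < p / x - 1 := by
    rw [← log_div hp0.ne' hx0.ne']
    exact log_lt_sub_one_of_pos (by positivity) (by rwa [ne_eq, div_eq_one_iff_eq hx0.ne'])
  have h₂ : log (1 - p) - log (1 - x) < (1 - p) / (1 - x) - 1 := by
    rw [← log_div (by linarith) hx1'.ne']
    refine log_lt_sub_one_of_pos (div_pos (by linarith) hx1') ?_
    rw [ne_eq, div_eq_one_iff_eq hx1'.ne']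
    exact fun h => hpx (by linarith)
  have hsplit : (p - x) * (a / x - (1 - a) / (1 - x)) =
      a * (p / x - 1) + (1 - a) * ((1 - p) / (1 - x) - 1) := by
    field_simp
    ring
  rw [hsplit]
  unfold bernoulliLogLik
  nlinarith [mul_lt_mul_of_pos_left h₁ ha0, mul_lt_mul_of_pos_left h₂ (sub_pos.2 ha1)]

lemma bernoulliLogLik_lt_self {a p : ℝ} (ha : a ∈ Ioo 0 1) (hp : p ∈ Ioo 0 1) (hpa : p ≠ a) :
    bernoulliLogLik a p < bernoulliLogLik a a := by
  have h := bernoulliLogLik_lt_add_mul ha hp ha hpa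
  have hzero : a / a - (1 - a) / (1 - a) = 0 := by
    rw [div_self ha.1.ne', div_self (sub_pos.2 ha.2).ne', sub_self]
  rwa [hzero, mul_zero, add_zero] at h

lemma bernoulliLogLik_monotoneOn {a : ℝ} (ha1 : a < 1) :
    MonotoneOn (bernoulliLogLik a) (Ioc 0 a) := by
  intro p hp x hx hpx
  rcases hpx.eq_or_lt with rfl | hlt
  · exact le_rfl
  have hslope : 0 ≤ a / x - (1 - a) / (1 - x) := by
    rw [sub_nonneg, div_le_div_iff₀ (by linarith [hx.2]) hx.1]
    nlinarith [hx.2]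
  have h := bernoulliLogLik_lt_add_mul ⟨hx.1.trans_le hx.2, ha1⟩ ⟨hp.1, by linarith [hp.2]⟩
    ⟨hx.1, by linarith [hx.2]⟩ hlt.ne
  nlinarith [mul_nonpos_of_nonpos_of_nonneg (sub_nonpos.2 hlt.le) hslope]

lemma bernoulliLogLik_antitoneOn {a : ℝ} (ha0 : 0 < a) :
    AntitoneOn (bernoulliLogLik a) (Ico a 1) := by
  intro x hx p hp hxp
  rcases hxp.eq_or_lt with rfl | hlt
  · exact le_rfl
  have hslope : a / x - (1 - a) / (1 - x) ≤ 0 := by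
    rw [sub_nonpos, div_le_div_iff₀ (ha0.trans_le hx.1) (by linarith [hx.2])]
    nlinarith [hx.1]
  have h := bernoulliLogLik_lt_add_mul ⟨ha0, hx.1.trans_lt hx.2⟩ ⟨by linarith [hp.1], hp.2⟩
    ⟨ha0.trans_le hx.1, hx.2⟩ hlt.ne'
  nlinarith [mul_nonpos_of_nonneg_of_nonpos (sub_nonneg.2 hlt.le) hslope]

lemma pow_mul_one_sub_pow_eq_exp {A B N : ℕ} (hN : A + B = N) {p : ℝ} (hp : p ∈ Ioo 0 1) :
    p ^ A * (1 - p) ^ B = exp (N * bernoulliLogLik (A / N) p) := by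
  rcases Nat.eq_zero_or_pos N with rfl | hN0
  · obtain ⟨rfl, rfl⟩ : A = 0 ∧ B = 0 := by omega
    simp
  have hB : (B : ℝ) = N - A := by rw [← hN]; push_cast; ring
  have hexp : (N : ℝ) * bernoulliLogLik (A / N) p = A * log p + B * log (1 - p) := by
    unfold bernoulliLogLik
    rw [hB]
    field_simp
  rw [hexp, exp_add, exp_nat_mul, exp_nat_mul, exp_log hp.1, exp_log (sub_pos.2 hp.2)]

lemma exp_mul_mul_pow_mul_one_sub_pow_le {A B N : ℕ} (hN : A + B = N) {x y c : ℝ}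
    (hx : x ∈ Ioo 0 1) (hy : y ∈ Ioo 0 1)
    (h : bernoulliLogLik (A / N) x + c ≤ bernoulliLogLik (A / N) y) :
    exp (c * N) * (x ^ A * (1 - x) ^ B) ≤ y ^ A * (1 - y) ^ B := by
  rw [pow_mul_one_sub_pow_eq_exp hN hx, pow_mul_one_sub_pow_eq_exp hN hy, ← exp_add]
  exact exp_le_exp.2 (by nlinarith [mul_le_mul_of_nonneg_left h (Nat.cast_nonneg (α := ℝ) N)])

lemma pow_mul_one_sub_pow_le_max {A B N : ℕ} (hN : A + B = N) {pL pU : ℝ} (hpL : 0 < pL)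
    (hpU : pU < 1) (hLa : pL ≤ A / N) (haU : A / N ≤ pU) {p : ℝ} (hp : p ∈ Icc 0 1 \ Ioo pL pU) :
    p ^ A * (1 - p) ^ B ≤ max (pL ^ A * (1 - pL) ^ B) (pU ^ A * (1 - pU) ^ B) := by
  obtain ⟨⟨hp0, hp1⟩, hpLU⟩ := hp
  have hA : A ≠ 0 := by
    rintro rfl
    simp at hLa
    linarith
  have hB : B ≠ 0 := by
    rintro rfl
    rw [← hN, add_zero, div_self (Nat.cast_ne_zero.2 hA)] at haU
    linarith
  have hmono : ∀ x ∈ Ioo (0 : ℝ) 1, ∀ y ∈ Ioo (0 : ℝ) 1,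
      bernoulliLogLik (A / N) x ≤ bernoulliLogLik (A / N) y →
        x ^ A * (1 - x) ^ B ≤ y ^ A * (1 - y) ^ B := fun x hx y hy h => by
    simpa using exp_mul_mul_pow_mul_one_sub_pow_le hN hx hy (c := 0) (by simpa using h)
  rcases not_and_or.1 hpLU with hle | hge
  · refine le_max_of_le_left ?_
    rcases hp0.eq_or_lt with rfl | hp0
    · simp only [ne_eq, hA, not_false_eq_true, zero_pow, zero_mul]
      exact mul_nonneg (pow_nonneg hpL.le _) (pow_nonneg (by linarith) _)
    refine hmono p ⟨hp0, by linarith⟩ pL ⟨hpL, by linarith⟩ ?_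
    exact bernoulliLogLik_monotoneOn (by linarith) ⟨hp0, by linarith⟩ ⟨hpL, hLa⟩ (not_lt.1 hle)
  · refine le_max_of_le_right ?_
    rcases hp1.eq_or_lt with rfl | hp1
    · simp only [sub_self, ne_eq, hB, not_false_eq_true, zero_pow, mul_zero]
      exact mul_nonneg (pow_nonneg (by linarith) _) (pow_nonneg (by linarith) _)
    have ha0 : (0 : ℝ) < A / N := hpL.trans_le hLa
    refine hmono p ⟨by linarith, hp1⟩ pU ⟨by linarith, hpU⟩ ?_
    exact bernoulliLogLik_antitoneOn ha0 ⟨haU, hpU⟩ ⟨by linarith, hp1⟩ (not_lt.1 hge)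

lemma exists_bernoulliLogLik_gap {p₀ pL pU : ℝ} (hpL : 0 < pL) (hLp₀ : pL < p₀)
    (hp₀U : p₀ < pU) (hpU : pU < 1) :
    ∃ ρ > 0, ρ ≤ p₀ - pL ∧ ρ ≤ pU - p₀ ∧ ∃ c > 0, ∀ a y, |a - p₀| < ρ → |y - p₀| < ρ →
      max (bernoulliLogLik a pL) (bernoulliLogLik a pU) + c < bernoulliLogLik a y := by
  have hp₀ : p₀ ∈ Ioo 0 1 := ⟨by linarith, by linarith⟩
  have hmax : max (bernoulliLogLik p₀ pL) (bernoulliLogLik p₀ pU) < bernoulliLogLik p₀ p₀ :=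
    max_lt (bernoulliLogLik_lt_self hp₀ ⟨hpL, by linarith⟩ hLp₀.ne)
      (bernoulliLogLik_lt_self hp₀ ⟨by linarith, hpU⟩ hp₀U.ne')
  set c := (bernoulliLogLik p₀ p₀ - max (bernoulliLogLik p₀ pL) (bernoulliLogLik p₀ pU)) / 2
    with hc
  have hlower : Continuous fun q : ℝ × ℝ =>
      max (bernoulliLogLik q.1 pL) (bernoulliLogLik q.1 pU) + c := by
    unfold bernoulliLogLik
    fun_prop
  have hlik : ContinuousAt (fun q : ℝ × ℝ => bernoulliLogLik q.1 q.2) (p₀, p₀) := by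
    unfold bernoulliLogLik
    fun_prop (disch := simp only; linarith)
  obtain ⟨ε, hε, hball⟩ := Metric.eventually_nhds_iff.1
    (hlower.continuousAt.eventually_lt hlik (by simp only; linarith [hc]))
  refine ⟨min ε (min (p₀ - pL) (pU - p₀)), lt_min hε (lt_min (by linarith) (by linarith)),
    (min_le_right _ _).trans (min_le_left _ _), (min_le_right _ _).trans (min_le_right _ _),
    c, by linarith [hc], fun a y ha hy => @hball (a, y) ?_⟩
  rw [Prod.dist_eq, Real.dist_eq, Real.dist_eq]
  exact max_lt (ha.trans_le (min_le_left _ _)) (hy.trans_le (min_le_left _ _))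

lemma one_sub_div_le_setIntegral_div_setIntegral {α : Type*} [MeasurableSpace α]
    (μ : Measure α) [IsFiniteMeasure μ] {f : α → ℝ} {S G I : Set α} {M K : ℝ}
    (hS : MeasurableSet S) (hG : MeasurableSet G) (hI : MeasurableSet I)
    (hGS : G ⊆ S) (hIG : I ⊆ G)
    (hf : IntegrableOn f S μ) (hf0 : ∀ x ∈ S, 0 ≤ f x) (hM : 0 < M) (hK : 0 < K)
    (hbad : ∀ x ∈ S \ G, f x ≤ M) (hgood : ∀ x ∈ I, K * M ≤ f x) (hμI : 0 < μ.real I) :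
    1 - μ.real (S \ G) / (K * μ.real I) ≤ (∫ x in G, f x ∂μ) / ∫ x in S, f x ∂μ ∧
      (∫ x in G, f x ∂μ) / ∫ x in S, f x ∂μ ≤ 1 := by
  have hsplit : ∫ x in S, f x ∂μ = (∫ x in G, f x ∂μ) + ∫ x in S \ G, f x ∂μ := by
    rw [← integral_inter_add_sdiff hG hf, inter_eq_right.2 hGS]
  have hIG_int : K * M * μ.real I ≤ ∫ x in G, f x ∂μ := by
    calc K * M * μ.real I ≤ ∫ x in I, f x ∂μ := by
          rw [mul_comm]
          exact setIntegral_ge_of_const_le hI (measure_ne_top _ _) hgood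
            (hf.mono_set (hIG.trans hGS))
      _ ≤ ∫ x in G, f x ∂μ :=
          setIntegral_mono_set (hf.mono_set hGS)
            ((ae_restrict_iff' hG).2 (ae_of_all _ fun x hx => hf0 x (hGS hx)))
            hIG.eventuallyLE
  have hbad_int : ∫ x in S \ G, f x ∂μ ≤ M * μ.real (S \ G) := by
    calc ∫ x in S \ G, f x ∂μ ≤ ∫ _ in S \ G, M ∂μ :=
          setIntegral_mono_on (hf.mono_set sdiff_subset) (integrableOn_const (measure_ne_top μ _))
            (hS.diff hG) hbad
      _ = M * μ.real (S \ G) := by rw [setIntegral_const, smul_eq_mul, mul_comm]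
  have hbad_nonneg : 0 ≤ ∫ x in S \ G, f x ∂μ :=
    setIntegral_nonneg (hS.diff hG) fun x hx => hf0 x hx.1
  have hgood_pos : 0 < ∫ x in G, f x ∂μ := (by positivity : 0 < K * M * μ.real I).trans_le hIG_int
  set Ig := ∫ x in G, f x ∂μ
  set Ib := ∫ x in S \ G, f x ∂μ
  have hratio : Ib * (K * μ.real I) ≤ μ.real (S \ G) * Ig := by
    calc Ib * (K * μ.real I) ≤ M * μ.real (S \ G) * (K * μ.real I) := by gcongr
      _ = μ.real (S \ G) * (K * M * μ.real I) := by ring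
      _ ≤ μ.real (S \ G) * Ig := by gcongr
  rw [hsplit]
  refine ⟨?_, (div_le_one (by linarith)).2 (by linarith)⟩
  calc 1 - μ.real (S \ G) / (K * μ.real I) ≤ 1 - Ib / Ig :=
        sub_le_sub_left ((div_le_div_iff₀ hgood_pos (by positivity)).2 hratio) 1
    _ ≤ Ig / (Ig + Ib) := by
        rw [one_sub_div hgood_pos.ne', div_le_div_iff₀ hgood_pos (by linarith)]
        nlinarith

lemma binomial_posterior_bounds (μ : Measure ℝ) [IsFiniteMeasure μ] {p₀ pL pU ρ c : ℝ}
    (hpL : 0 < pL) (hpU : pU < 1) (hρL : ρ ≤ p₀ - pL) (hρU : ρ ≤ pU - p₀)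
    (hgap : ∀ a y, |a - p₀| < ρ → |y - p₀| < ρ →
      max (bernoulliLogLik a pL) (bernoulliLogLik a pU) + c < bernoulliLogLik a y)
    (hμ : 0 < μ.real {p | |p - p₀| < ρ}) {A B N : ℕ} (hN : A + B = N)
    (ha : |(A : ℝ) / N - p₀| < ρ) :
    1 - μ.real (Icc 0 1 \ Ioo pL pU) / (exp (c * N) * μ.real {p | |p - p₀| < ρ}) ≤
        (∫ p in Ioo pL pU, p ^ A * (1 - p) ^ B ∂μ) / ∫ p in Icc 0 1, p ^ A * (1 - p) ^ B ∂μ ∧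
      (∫ p in Ioo pL pU, p ^ A * (1 - p) ^ B ∂μ) / ∫ p in Icc 0 1, p ^ A * (1 - p) ^ B ∂μ ≤ 1 := by
  have hball : ∀ {p : ℝ}, |p - p₀| < ρ → p ∈ Ioo pL pU := fun hp => by
    rw [abs_sub_lt_iff] at hp
    constructor <;> linarith
  have hLaU := hball ha
  have hLU : pL < pU := by linarith [(abs_nonneg _).trans_lt ha]
  have hgood : ∀ p ∈ {p : ℝ | |p - p₀| < ρ},
      exp (c * N) * max (pL ^ A * (1 - pL) ^ B) (pU ^ A * (1 - pU) ^ B) ≤ p ^ A * (1 - p) ^ B := by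
    intro p hp
    have hgap' := hgap _ p ha hp
    have hp01 : p ∈ Ioo 0 1 := ⟨by linarith [(hball hp).1], by linarith [(hball hp).2]⟩
    rw [mul_max_of_nonneg _ _ (exp_pos _).le]
    exact max_le
      (exp_mul_mul_pow_mul_one_sub_pow_le hN ⟨hpL, by linarith⟩ hp01
        (by linarith [le_max_left (bernoulliLogLik (A / N) pL) (bernoulliLogLik (A / N) pU)]))
      (exp_mul_mul_pow_mul_one_sub_pow_le hN ⟨by linarith, hpU⟩ hp01
        (by linarith [le_max_right (bernoulliLogLik (A / N) pL) (bernoulliLogLik (A / N) pU)]))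
  refine one_sub_div_le_setIntegral_div_setIntegral μ measurableSet_Icc measurableSet_Ioo
    (measurableSet_lt (by fun_prop) measurable_const)
    (fun p hp => ⟨by linarith [hp.1], by linarith [hp.2]⟩) (fun p hp => hball hp)
    ((by fun_prop : Continuous fun p : ℝ => p ^ A * (1 - p) ^ B).continuousOn.integrableOn_compact
      isCompact_Icc)
    (fun p hp => mul_nonneg (pow_nonneg hp.1 _) (pow_nonneg (sub_nonneg.2 hp.2) _))
    (lt_max_of_lt_left (mul_pos (pow_pos hpL _) (pow_pos (by linarith) _))) (exp_pos _)
    (fun p hp => pow_mul_one_sub_pow_le_max hN hpL hpU hLaU.1.le hLaU.2.le hp) hgood hμ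

lemma eventually_abs_add_div_sub_lt {n r : ℕ → ℕ} {p₀ ρ : ℝ}
    (hn : Tendsto (fun N => (n N : ℝ) / N) atTop (nhds p₀))
    (hr : Tendsto (fun N => (r N : ℝ) / N) atTop (nhds 0)) (hρ : 0 < ρ) :
    ∀ᶠ N in atTop, ∀ s ≤ r N, |((n N + s : ℕ) : ℝ) / N - p₀| < ρ := by
  filter_upwards [Metric.tendsto_nhds.1 hn (ρ / 2) (half_pos hρ),
    Metric.tendsto_nhds.1 hr (ρ / 2) (half_pos hρ)] with N hnN hrN s hs
  rw [Real.dist_eq, abs_lt] at hnN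
  rw [Real.dist_eq, sub_zero, abs_lt] at hrN
  have hsr : (s : ℝ) / N ≤ r N / N :=
    div_le_div_of_nonneg_right (by exact_mod_cast hs) N.cast_nonneg
  have hs0 : (0 : ℝ) ≤ s / N := by positivity
  rw [Nat.cast_add, add_div, abs_lt]
  constructor <;> linarith

theorem stmt_16_general (p₀ pL pU : ℝ)
    (hpL : 0 < pL) (hpU : pU < 1) (hLp₀ : pL < p₀) (hp₀U : p₀ < pU)
    (π₀ : Measure ℝ) [IsProbabilityMeasure π₀]
    (hπ₀_pos : ∀ ε > 0, 0 < π₀ {p : ℝ | |p - p₀| < ε})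
    (n m r : ℕ → ℕ) (hsum : ∀ N, n N + m N + r N = N)
    (hn : Tendsto (fun N => (n N : ℝ) / N) atTop (nhds p₀))
    (hr : Tendsto (fun N => (r N : ℝ) / N) atTop (nhds 0))
    (L : ℕ → ℕ → ℝ → ℝ)
    (hL : ∀ N s p, L N s p = p ^ (n N + s) * (1 - p) ^ (m N + r N - s)) :
    Tendsto (fun N =>
        (Finset.range (r N + 1)).inf' Finset.nonempty_range_add_one
          (fun s =>
            (∫ p in Set.Ioo pL pU, L N s p ∂π₀) /
              (∫ p in Set.Icc (0:ℝ) 1, L N s p ∂π₀)))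
      atTop (nhds 1) := by
  obtain ⟨ρ, hρ, hρL, hρU, c, hc, hgap⟩ := exists_bernoulliLogLik_gap hpL hLp₀ hp₀U hpU
  have hμ : 0 < π₀.real {p | |p - p₀| < ρ} :=
    ENNReal.toReal_pos (hπ₀_pos ρ hρ).ne' (measure_ne_top _ _)
  have hbounds : ∀ᶠ N : ℕ in atTop, ∀ s ∈ Finset.range (r N + 1),
      1 - π₀.real (Icc 0 1 \ Ioo pL pU) / (exp (c * N) * π₀.real {p | |p - p₀| < ρ}) ≤
          (∫ p in Ioo pL pU, L N s p ∂π₀) / (∫ p in Icc 0 1, L N s p ∂π₀) ∧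
        (∫ p in Ioo pL pU, L N s p ∂π₀) / (∫ p in Icc 0 1, L N s p ∂π₀) ≤ 1 := by
    filter_upwards [eventually_abs_add_div_sub_lt hn hr hρ] with N hN s hs
    have hs : s ≤ r N := Nat.lt_succ_iff.1 (Finset.mem_range.1 hs)
    simp only [hL]
    exact binomial_posterior_bounds π₀ hpL hpU hρL hρU hgap hμ (by have := hsum N; omega) (hN s hs)
  have hlower : Tendsto (fun N : ℕ =>
      1 - π₀.real (Icc 0 1 \ Ioo pL pU) / (exp (c * N) * π₀.real {p | |p - p₀| < ρ}))
      atTop (nhds 1) := by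
    have hexp := (tendsto_exp_atTop.comp
      (tendsto_natCast_atTop_atTop.const_mul_atTop hc)).atTop_mul_const hμ
    simpa using tendsto_const_nhds.sub (tendsto_const_nhds.div_atTop hexp)
  refine tendsto_of_tendsto_of_tendsto_of_le_of_le' hlower tendsto_const_nhds ?_ ?_
  · filter_upwards [hbounds] with N h
    exact Finset.le_inf' _ _ fun s hs => (h s hs).1
  · filter_upwards [hbounds] with N h
    have h0 := Finset.mem_range.2 (Nat.succ_pos (r N))
    exact (Finset.inf'_le _ h0).trans (h 0 h0).2

/-- Deterministic core of Lemma 5.2: the posterior probability of the interval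
(p_L, p_U) around the true toxicity probability p₀ under the imputed
complete-data likelihoods L_{N,s}(p) = p^{n_N+s}(1−p)^{m_N+r_N−s} converges to 1
uniformly over all imputations s ∈ {0,…,r_N}. -/
theorem stmt_16 (p₀ pL pU : ℝ) (hp₀ : p₀ ∈ Set.Ioo (0:ℝ) 1)
    (hpL : 0 < pL) (hpU : pU < 1) (hLp₀ : pL < p₀) (hp₀U : p₀ < pU)
    (π₀ : Measure ℝ) [IsProbabilityMeasure π₀]
    (hπ₀_supp : π₀ (Set.Icc (0:ℝ) 1)ᶜ = 0)
    (hπ₀_pos : ∀ ε > 0, 0 < π₀ {p : ℝ | |p - p₀| < ε})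
    (n m r : ℕ → ℕ) (hsum : ∀ N, n N + m N + r N = N)
    (hn : Tendsto (fun N => (n N : ℝ) / N) atTop (nhds p₀))
    (hr : Tendsto (fun N => (r N : ℝ) / N) atTop (nhds 0))
    (L : ℕ → ℕ → ℝ → ℝ)
    (hL : ∀ N s p, L N s p = p ^ (n N + s) * (1 - p) ^ (m N + r N - s)) :
    Tendsto (fun N =>
        (Finset.range (r N + 1)).inf' Finset.nonempty_range_add_one
          (fun s =>
            (∫ p in Set.Ioo pL pU, L N s p ∂π₀) /
              (∫ p in Set.Icc (0:ℝ) 1, L N s p ∂π₀)))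
      atTop (nhds 1) :=
  stmt_16_general p₀ pL pU hpL hpU hLp₀ hp₀U π₀ hπ₀_pos n m r hsum hn hr L hL
end
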